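/- arXiv:1910.12233 — 2 statements merged into one kernel-verified Lean document; each statement's English description precedes it below -/
import Mathlib

section
/- For every finite simple graph on n vertices, λ_max ≤ 2 − min over edges {v,w} of |N(v)∩N(w)| / max(deg v, deg w), where λ_max is the largest eigenvalue of the normalized Laplacian. -/
/-!
Normalize an eigenvector `f` of `L` for the eigenvalue `λ` so that `f v = 1 = max |f|`, let `w`
be a neighbour of `v` minimizing `f`, `u = f w`, and write `μ = 1 - λ`, so that
`∑_{y ∼ z} f y = μ d_z f z` for every vertex `z`. Bounding the neighbours of `v` below by `u`
and those of `w` above by `1`, except for the common neighbours `C` of `v` and `w`, whose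
contribution `S` appears in both equations, gives
`(d_v - c) u + S ≤ μ d_v` and `μ d_w u ≤ d_w - c + S` with `c = |C|`.
Eliminating `S`, and using `u ≤ μ` (the equation at `v` again), an elementary case analysis on
the sign of `u` and on which degree is larger yields `c / max(d_v, d_w) ≤ 1 + μ = 2 - λ`.
-/

/-- The normalized Laplacian `L = I - D⁻¹ A` of a graph, as a real matrix. -/
noncomputable def normLap {V : Type*} [Fintype V] [DecidableEq V] (G : SimpleGraph V)
    [DecidableRel G.Adj] : Matrix V V ℝ :=
  1 - Matrix.of (fun v w => if G.Adj v w then 1 / (G.degree v : ℝ) else 0)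

open Finset Matrix

theorem Finset.card_sdiff_mul_add_sum_le_sum {ι : Type*} [DecidableEq ι] {s t : Finset ι}
    (hts : t ⊆ s) {f : ι → ℝ} {a : ℝ} (h : ∀ y ∈ s \ t, a ≤ f y) :
    ((#s : ℝ) - #t) * a + ∑ y ∈ t, f y ≤ ∑ y ∈ s, f y := by
  have hcard : ((#(s \ t) : ℕ) : ℝ) = #s - #t := by
    rw [card_sdiff_of_subset hts, Nat.cast_sub (card_le_card hts)]
  rw [← sum_sdiff hts, ← hcard, ← nsmul_eq_mul]
  exact add_le_add_left (card_nsmul_le_sum _ _ _ h) _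

theorem Finset.sum_le_card_sdiff_mul_add_sum {ι : Type*} [DecidableEq ι] {s t : Finset ι}
    (hts : t ⊆ s) {f : ι → ℝ} {a : ℝ} (h : ∀ y ∈ s \ t, f y ≤ a) :
    ∑ y ∈ s, f y ≤ ((#s : ℝ) - #t) * a + ∑ y ∈ t, f y := by
  have hcard : ((#(s \ t) : ℕ) : ℝ) = #s - #t := by
    rw [card_sdiff_of_subset hts, Nat.cast_sub (card_le_card hts)]
  rw [← sum_sdiff hts, ← hcard, ← nsmul_eq_mul]
  exact add_le_add_left (sum_le_card_nsmul _ _ _ h) _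

theorem Matrix.exists_eigenvector_eq_one_abs_le_one {ι : Type*} [Fintype ι] {A : Matrix ι ι ℝ}
    {f : ι → ℝ} {μ : ℝ} (hf : f ≠ 0) (hAf : A *ᵥ f = μ • f) :
    ∃ g : ι → ℝ, ∃ v : ι, A *ᵥ g = μ • g ∧ g v = 1 ∧ ∀ z, |g z| ≤ 1 := by
  obtain ⟨z₀, hz₀⟩ := Function.ne_iff.mp hf
  obtain ⟨v, -, hv⟩ := exists_max_image univ (fun z => |f z|) ⟨z₀, mem_univ z₀⟩
  have hfv : f v ≠ 0 := fun h0 =>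
    hz₀ (abs_nonpos_iff.mp (by simpa [h0] using hv z₀ (mem_univ _)))
  refine ⟨(f v)⁻¹ • f, v, ?_, inv_mul_cancel₀ hfv, fun z => ?_⟩
  · rw [mulVec_smul, hAf, smul_comm]
  · rw [Pi.smul_apply, smul_eq_mul, abs_mul, abs_inv, inv_mul_le_one₀ (abs_pos.mpr hfv)]
    exact hv z (mem_univ z)

theorem div_max_le_one_add {dv dw c u S μ : ℝ} (hdv : 0 < dv) (hc : c ≤ dv)
    (hu₀ : -1 ≤ u) (huμ : u ≤ μ)
    (hv : (dv - c) * u + S ≤ μ * dv) (hw : μ * dw * u ≤ (dw - c) + S) :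
    c / max dv dw ≤ 1 + μ := by
  have hcomb : c * (1 - u) + (1 + u) * (dv - dw) ≤ (1 + μ) * (dv - dw * u) := by linarith
  by_cases hcase : c / max dv dw ≤ 1 + u
  · linarith
  have hD : 0 < max dv dw := lt_max_of_lt_left hdv
  have hu : u < 0 := by linarith [(div_le_one hD).mpr (le_max_of_le_left hc)]
  rw [div_le_iff₀ hD]
  rcases le_total dw dv with hle | hle
  · rw [max_eq_left hle]
    nlinarith [mul_nonneg (mul_nonneg (by linarith : 0 ≤ 1 + μ) (by linarith : 0 ≤ -u))
      (sub_nonneg.mpr hle), mul_nonneg (by linarith : 0 ≤ 1 + u) (sub_nonneg.mpr hle)]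
  · rw [max_eq_right hle]
    nlinarith [mul_le_mul_of_nonneg_right (by linarith : 1 + u ≤ 1 + μ) (sub_nonneg.mpr hle)]

namespace SimpleGraph

variable {V : Type*} [Fintype V] [DecidableEq V] (G : SimpleGraph V) [DecidableRel G.Adj]

theorem ncard_commonNeighbors (v w : V) :
    (G.commonNeighbors v w).ncard = #(G.neighborFinset v ∩ G.neighborFinset w) := by
  rw [← Set.ncard_coe_finset, coe_inter, coe_neighborFinset, coe_neighborFinset]
  rfl

theorem normLap_mulVec_apply (f : V → ℝ) (v : V) :
    (normLap G *ᵥ f) v = f v - (∑ y ∈ G.neighborFinset v, f y) / G.degree v := by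
  rw [normLap, sub_mulVec, one_mulVec, Pi.sub_apply, neighborFinset_eq_filter, sum_filter,
    sum_div]
  congr 1
  refine sum_congr rfl fun y _ => ?_
  simp only [of_apply]
  split_ifs <;> ring

variable {G}

theorem sum_neighborFinset_eq_of_normLap_mulVec_eq {f : V → ℝ} {μ : ℝ}
    (hf : normLap G *ᵥ f = μ • f) {v : V} (hv : G.degree v ≠ 0) :
    ∑ y ∈ G.neighborFinset v, f y = (1 - μ) * G.degree v * f v := by
  have h := congrFun hf v
  rw [normLap_mulVec_apply, Pi.smul_apply, smul_eq_mul] at h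
  field_simp at h
  linarith

theorem exists_adj_commonNeighbors_div_le_two_sub {f : V → ℝ} {μ : ℝ}
    (hf : normLap G *ᵥ f = μ • f) {v : V} (hv : 0 < G.degree v) (hfv : f v = 1)
    (hf₁ : ∀ z, |f z| ≤ 1) :
    ∃ w, G.Adj v w ∧ ((G.commonNeighbors v w).ncard : ℝ) /
      ((max (G.degree v) (G.degree w) : ℕ) : ℝ) ≤ 2 - μ := by
  have hNv : (G.neighborFinset v).Nonempty := by
    rwa [← card_pos, card_neighborFinset_eq_degree]
  obtain ⟨w, hw, hwmin⟩ := exists_min_image (G.neighborFinset v) f hNv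
  have hadj : G.Adj v w := (mem_neighborFinset _ _ _).mp hw
  refine ⟨w, hadj, ?_⟩
  set C := G.neighborFinset v ∩ G.neighborFinset w
  have hsv := sum_neighborFinset_eq_of_normLap_mulVec_eq hf hv.ne'
  have hsw := sum_neighborFinset_eq_of_normLap_mulVec_eq hf hadj.degree_pos_right.ne'
  rw [hfv, mul_one] at hsv
  have hlow := card_sdiff_mul_add_sum_le_sum (t := C) (a := f w) inter_subset_left
    fun y hy => hwmin y (mem_sdiff.mp hy).1
  have hupp := sum_le_card_sdiff_mul_add_sum (t := C) (a := 1) inter_subset_right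
    fun y _ => (abs_le.mp (hf₁ y)).2
  have hmin := card_nsmul_le_sum _ _ _ hwmin
  rw [card_neighborFinset_eq_degree] at hlow hupp hmin
  have hdv : (0 : ℝ) < G.degree v := Nat.cast_pos.mpr hv
  have hwμ : f w ≤ 1 - μ := by
    rw [nsmul_eq_mul, mul_comm] at hmin
    exact le_of_mul_le_mul_right (hmin.trans hsv.le) hdv
  have hC : (#C : ℝ) ≤ G.degree v := by
    rw [← card_neighborFinset_eq_degree]
    exact_mod_cast card_le_card inter_subset_left
  rw [ncard_commonNeighbors, Nat.cast_max, show 2 - μ = 1 + (1 - μ) by ring]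
  exact div_max_le_one_add (S := ∑ y ∈ C, f y) hdv hC (abs_le.mp (hf₁ w)).1 hwμ
    (by linarith) (by linarith)

end SimpleGraph

theorem stmt4 {V : Type*} [Fintype V] [DecidableEq V] (G : SimpleGraph V)
    [DecidableRel G.Adj] (hiso : ∀ v : V, 0 < G.degree v)
    (m lam : ℝ)
    (hm : IsLeast {x : ℝ | ∃ v w : V, G.Adj v w ∧
      x = ((G.commonNeighbors v w).ncard : ℝ) /
          ((max (G.degree v) (G.degree w) : ℕ) : ℝ)} m)
    (hlam : IsGreatest
      {μ : ℝ | ∃ f : V → ℝ, f ≠ 0 ∧ (normLap G).mulVec f = μ • f} lam) :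
    lam ≤ 2 - m := by
  obtain ⟨f, hf, hlamf⟩ := hlam.1
  obtain ⟨g, v, hg, hgv, hg₁⟩ := Matrix.exists_eigenvector_eq_one_abs_le_one hf hlamf
  obtain ⟨w, hadj, hratio⟩ := G.exists_adj_commonNeighbors_div_le_two_sub hg (hiso v) hgv hg₁
  linarith [hm.2 ⟨v, w, hadj, rfl⟩]
end

section
/- In any (k,d)-one-sided bipartite graph, (d+k)/d is an eigenvalue of the normalized Laplacian. -/
/-- A `(k,d)`-one-sided bipartite graph: the vertex set splits as `V₁ ⊔ V₂` with
`|V₂| = k`, every vertex of `V₁` adjacent to every vertex of `V₂`, no edges inside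
`V₂`, and every vertex of `V₁` of degree `d`. -/
def IsOneSidedBipartite {V : Type*} [Fintype V] [DecidableEq V] (G : SimpleGraph V)
    [DecidableRel G.Adj] (V₁ V₂ : Finset V) (k d : ℕ) : Prop :=
  Disjoint V₁ V₂ ∧ V₁ ∪ V₂ = Finset.univ ∧ V₂.card = k ∧
  (∀ v ∈ V₁, ∀ w ∈ V₂, G.Adj v w) ∧
  (∀ v ∈ V₂, ∀ w ∈ V₂, ¬ G.Adj v w) ∧
  (∀ v ∈ V₁, G.degree v = d)


/- The eigenvector is `f = k` on `V₁` and `f = -d` on `V₂`. A vertex of `V₂` sees only `V₁`,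
so its neighbourhood average is `k`; a vertex of `V₁` sees `k` vertices of `V₂` and `d - k` of
`V₁`, so its neighbourhood sum is `(d - k) k - k d = -k²`. In both cases
`f v - avg = (d + k)/d · f v`. -/

open Finset Matrix

theorem normLap_mulVec_apply {V : Type*} [Fintype V] [DecidableEq V] (G : SimpleGraph V)
    [DecidableRel G.Adj] (f : V → ℝ) (v : V) :
    (normLap G *ᵥ f) v = f v - (G.degree v : ℝ)⁻¹ * ∑ w ∈ G.neighborFinset v, f w := by
  simp only [normLap, sub_mulVec, one_mulVec, Pi.sub_apply]
  congr 1
  simp only [mulVec, dotProduct, of_apply, mul_sum, SimpleGraph.neighborFinset_eq_filter,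
    sum_filter]
  refine sum_congr rfl fun w _ => ?_
  split_ifs <;> simp

theorem sum_ite_mem_const {α R : Type*} [DecidableEq α] [NonAssocSemiring R] (s t : Finset α)
    (a b : R) :
    ∑ w ∈ t, (if w ∈ s then a else b) = #(t ∩ s) * a + #(t \ s) * b := by
  rw [sum_ite, filter_mem_eq_inter, filter_notMem_eq_sdiff]
  simp only [sum_const, nsmul_eq_mul]

namespace IsOneSidedBipartite

variable {V : Type*} [Fintype V] [DecidableEq V] {G : SimpleGraph V} [DecidableRel G.Adj]
  {V₁ V₂ : Finset V} {k d : ℕ}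

theorem card_right (hG : IsOneSidedBipartite G V₁ V₂ k d) : #V₂ = k := hG.2.2.1

theorem adj_of_mem (hG : IsOneSidedBipartite G V₁ V₂ k d) {v w : V} (hv : v ∈ V₁)
    (hw : w ∈ V₂) : G.Adj v w :=
  hG.2.2.2.1 v hv w hw

theorem not_adj_of_mem_right (hG : IsOneSidedBipartite G V₁ V₂ k d) {v w : V} (hv : v ∈ V₂)
    (hw : w ∈ V₂) : ¬G.Adj v w :=
  hG.2.2.2.2.1 v hv w hw

theorem degree_of_mem_left (hG : IsOneSidedBipartite G V₁ V₂ k d) {v : V} (hv : v ∈ V₁) :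
    G.degree v = d :=
  hG.2.2.2.2.2 v hv

theorem mem_right_iff (hG : IsOneSidedBipartite G V₁ V₂ k d) {v : V} : v ∈ V₂ ↔ v ∉ V₁ := by
  obtain ⟨hdisj, huniv, -⟩ := hG
  have hv : v ∈ V₁ ∪ V₂ := huniv ▸ mem_univ v
  rw [mem_union] at hv
  exact ⟨fun h₂ h₁ => disjoint_left.mp hdisj h₁ h₂, hv.resolve_left⟩

theorem card_left_add (hG : IsOneSidedBipartite G V₁ V₂ k d) : #V₁ + k = Fintype.card V := by
  obtain ⟨hdisj, huniv, hcard, -⟩ := hG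
  rw [← hcard, ← card_union_of_disjoint hdisj, huniv, card_univ]

theorem neighborFinset_of_mem_right (hG : IsOneSidedBipartite G V₁ V₂ k d) {v : V}
    (hv : v ∈ V₂) : G.neighborFinset v = V₁ := by
  ext w
  rw [SimpleGraph.mem_neighborFinset]
  refine ⟨fun hvw => ?_, fun hw => (hG.adj_of_mem hw hv).symm⟩
  by_contra hw
  exact hG.not_adj_of_mem_right hv (hG.mem_right_iff.mpr hw) hvw

theorem neighborFinset_sdiff_left (hG : IsOneSidedBipartite G V₁ V₂ k d) {v : V}
    (hv : v ∈ V₁) : G.neighborFinset v \ V₁ = V₂ := by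
  ext w
  rw [mem_sdiff, SimpleGraph.mem_neighborFinset, hG.mem_right_iff]
  exact ⟨And.right, fun hw => ⟨hG.adj_of_mem hv (hG.mem_right_iff.mpr hw), hw⟩⟩

theorem card_neighborFinset_inter_left_add (hG : IsOneSidedBipartite G V₁ V₂ k d) {v : V}
    (hv : v ∈ V₁) : #(G.neighborFinset v ∩ V₁) + k = d := by
  rw [← hG.card_right, ← hG.neighborFinset_sdiff_left hv, card_inter_add_card_sdiff,
    SimpleGraph.card_neighborFinset_eq_degree, hG.degree_of_mem_left hv]

theorem normLap_mulVec_eq_smul (hG : IsOneSidedBipartite G V₁ V₂ k d) (hd : d ≠ 0)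
    (hV₁ : V₁.Nonempty) :
    normLap G *ᵥ (fun v => if v ∈ V₁ then (k : ℝ) else -d) =
      ((d + k) / d : ℝ) • fun v => if v ∈ V₁ then (k : ℝ) else -d := by
  have hdR : (d : ℝ) ≠ 0 := Nat.cast_ne_zero.mpr hd
  funext v
  rw [normLap_mulVec_apply, sum_ite_mem_const, Pi.smul_apply, smul_eq_mul]
  by_cases hv : v ∈ V₁
  · have hcard : (#(G.neighborFinset v ∩ V₁) : ℝ) = d - k := by
      rw [← hG.card_neighborFinset_inter_left_add hv]
      push_cast
      ring
    rw [hcard, hG.neighborFinset_sdiff_left hv, hG.card_right, hG.degree_of_mem_left hv,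
      if_pos hv]
    field_simp
    ring
  · have hv₂ := hG.mem_right_iff.mpr hv
    have hV₁R : (#V₁ : ℝ) ≠ 0 := Nat.cast_ne_zero.mpr hV₁.card_pos.ne'
    rw [← SimpleGraph.card_neighborFinset_eq_degree, hG.neighborFinset_of_mem_right hv₂,
      inter_self, sdiff_self, bot_eq_empty, card_empty, if_neg hv]
    field_simp
    ring

end IsOneSidedBipartite

theorem stmt12_general {V : Type*} [Fintype V] [DecidableEq V] (G : SimpleGraph V)
    [DecidableRel G.Adj] (V₁ V₂ : Finset V) (n k d : ℕ)
    (hn : n = Fintype.card V) (hk : 0 < k)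
    (hkd : k ≤ d) (hdn : d ≤ n - 1)
    (hG : IsOneSidedBipartite G V₁ V₂ k d) :
    ∃ f : V → ℝ, f ≠ 0 ∧
      (normLap G).mulVec f = (((d : ℝ) + (k : ℝ)) / (d : ℝ)) • f := by
  have hd : d ≠ 0 := by omega
  have hV₁ : V₁.Nonempty := card_pos.mp (by have := hG.card_left_add; omega)
  obtain ⟨w, hw⟩ : V₂.Nonempty := card_pos.mp (hG.card_right ▸ hk)
  refine ⟨fun v => if v ∈ V₁ then (k : ℝ) else -d, fun hf => hd ?_,
    hG.normLap_mulVec_eq_smul hd hV₁⟩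
  have hfw := congrFun hf w
  simp only [if_neg (hG.mem_right_iff.mp hw), Pi.zero_apply, neg_eq_zero] at hfw
  exact_mod_cast hfw

theorem stmt12 {V : Type*} [Fintype V] [DecidableEq V] (G : SimpleGraph V)
    [DecidableRel G.Adj] (V₁ V₂ : Finset V) (n k d : ℕ)
    (hn : n = Fintype.card V) (hk : 0 < k) (hk2 : k ≤ n - 2)
    (hkd : k ≤ d) (hdn : d ≤ n - 1)
    (hG : IsOneSidedBipartite G V₁ V₂ k d) :
    ∃ f : V → ℝ, f ≠ 0 ∧
      (normLap G).mulVec f = (((d : ℝ) + (k : ℝ)) / (d : ℝ)) • f :=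
  stmt12_general G V₁ V₂ n k d hn hk hkd hdn hG
end
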